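/- Weak forward-reverse bisimilarity coincides with branching bisimilarity over initial processes: if P1 and P2 are initial processes of the reversible sequential calculus, then P1 ≈FRB P2 if and only if P1 ≈BB P2. -/
import Mathlib


inductive Proc (A : Type) : Type
  | nil : Proc A
  | pre : A → Proc A → Proc A
  | exe : A → Proc A → Proc A
  | choice : Proc A → Proc A → Proc A

inductive Initial {A : Type} : Proc A → Prop
  | nil : Initial .nil
  | pre {a : A} {P : Proc A} : Initial P → Initial (.pre a P)
  | choice {P Q : Proc A} : Initial P → Initial Q → Initial (.choice P Q)

inductive Final {A : Type} : Proc A → Prop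
  | nil : Final .nil
  | exe {a : A} {P : Proc A} : Final P → Final (.exe a P)
  | choiceL {P Q : Proc A} : Final P → Initial Q → Final (.choice P Q)
  | choiceR {P Q : Proc A} : Initial P → Final Q → Final (.choice P Q)

inductive Reachable {A : Type} : Proc A → Prop
  | nil : Reachable .nil
  | pre {a : A} {P : Proc A} : Initial P → Reachable (.pre a P)
  | exe {a : A} {P : Proc A} : Reachable P → Reachable (.exe a P)
  | choiceL {P Q : Proc A} : Reachable P → Initial Q → Reachable (.choice P Q)
  | choiceR {P Q : Proc A} : Initial P → Reachable Q → Reachable (.choice P Q)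

inductive Tr {A : Type} : Proc A → A → Proc A → Prop
  | actf {a : A} {P : Proc A} : Initial P → Tr (.pre a P) a (.exe a P)
  | actp {a b : A} {P P' : Proc A} : Tr P b P' → Tr (.exe a P) b (.exe a P')
  | chol {a : A} {P1 P1' P2 : Proc A} : Tr P1 a P1' → Initial P2 →
      Tr (.choice P1 P2) a (.choice P1' P2)
  | chor {a : A} {P1 P2 P2' : Proc A} : Tr P2 a P2' → Initial P1 →
      Tr (.choice P1 P2) a (.choice P1 P2')

def TauStar {A : Type} (τ : A) : Proc A → Proc A → Prop :=
  Relation.ReflTransGen (fun p q => Tr p τ q)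

def WeakStep {A : Type} (τ a : A) (P Q : Proc A) : Prop :=
  ∃ P1 P2, TauStar τ P P1 ∧ Tr P1 a P2 ∧ TauStar τ P2 Q

def IsWeakFwdBisim {A : Type} (τ : A) (B : Proc A → Proc A → Prop) : Prop :=
  (∀ P Q, B P Q → B Q P) ∧
  (∀ P Q P', B P Q → Tr P τ P' → ∃ Q', TauStar τ Q Q' ∧ B P' Q') ∧
  (∀ P Q a P', B P Q → Tr P a P' → a ≠ τ → ∃ Q', WeakStep τ a Q Q' ∧ B P' Q')

def IsWeakFRBisim {A : Type} (τ : A) (B : Proc A → Proc A → Prop) : Prop :=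
  (∀ P Q, B P Q → B Q P) ∧
  (∀ P Q P', B P Q → Tr P τ P' → ∃ Q', TauStar τ Q Q' ∧ B P' Q') ∧
  (∀ P Q a P', B P Q → Tr P a P' → a ≠ τ → ∃ Q', WeakStep τ a Q Q' ∧ B P' Q') ∧
  (∀ P Q P', B P Q → Tr P' τ P → ∃ Q', TauStar τ Q' Q ∧ B P' Q') ∧
  (∀ P Q a P', B P Q → Tr P' a P → a ≠ τ → ∃ Q', WeakStep τ a Q' Q ∧ B P' Q')

def WFB {A : Type} (τ : A) (P Q : Proc A) : Prop := ∃ B, IsWeakFwdBisim τ B ∧ B P Q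

def WFRB {A : Type} (τ : A) (P Q : Proc A) : Prop := ∃ B, IsWeakFRBisim τ B ∧ B P Q

def IsBranchingBisim {A : Type} (τ : A) (B : Proc A → Proc A → Prop) : Prop :=
  (∀ P Q, B P Q → B Q P) ∧
  (∀ P Q a P', B P Q → Tr P a P' →
    (a = τ ∧ B P' Q) ∨
    ∃ Q1 Q', TauStar τ Q Q1 ∧ Tr Q1 a Q' ∧ B P Q1 ∧ B P' Q')

def BB {A : Type} (τ : A) (P Q : Proc A) : Prop := ∃ B, IsBranchingBisim τ B ∧ B P Q

def ReachFrom {A : Type} : Proc A → Proc A → Prop :=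
  Relation.ReflTransGen (fun p q => ∃ a, Tr p a q)

section Aux

open Relation

variable {A : Type} {τ : A}

theorem tr_not_initial {P P' : Proc A} {a : A} (h : Tr P a P') : ¬ Initial P' := by
  induction h with
  | actf _ => intro h; cases h
  | actp _ ih => intro h; cases h
  | chol _ _ ih => intro h; cases h with | choice hP hQ => exact ih hP
  | chor _ _ ih => intro h; cases h with | choice hP hQ => exact ih hQ

theorem tr_unique {P X Y : Proc A} {a b : A} (h1 : Tr X a P) (h2 : Tr Y b P) :
    X = Y ∧ a = b := by
  induction h1 generalizing Y b with
  | actf hI =>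
    cases h2 with
    | actf _ => exact ⟨rfl, rfl⟩
    | actp h => exact absurd hI (tr_not_initial h)
  | actp h ih =>
    cases h2 with
    | actf hI => exact absurd hI (tr_not_initial h)
    | actp h' =>
      obtain ⟨he, ha⟩ := ih h'
      exact ⟨by rw [he], ha⟩
  | chol h hQ ih =>
    cases h2 with
    | chol h' hQ' =>
      obtain ⟨he, ha⟩ := ih h'
      exact ⟨by rw [he], ha⟩
    | chor h' hI => exact absurd hI (tr_not_initial h)
  | chor h hP ih =>
    cases h2 with
    | chol h' hI => exact absurd hI (tr_not_initial h)
    | chor h' hP' =>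
      obtain ⟨he, ha⟩ := ih h'
      exact ⟨by rw [he], ha⟩

theorem ts_refl {P : Proc A} : TauStar τ P P := ReflTransGen.refl

theorem ts_single {P P' : Proc A} (h : Tr P τ P') : TauStar τ P P' := ReflTransGen.single h

theorem ts_trans {P Q R : Proc A} (h1 : TauStar τ P Q) (h2 : TauStar τ Q R) : TauStar τ P R :=
  ReflTransGen.trans h1 h2

theorem ts_tail {P Q R : Proc A} (h : TauStar τ P Q) (h2 : Tr Q τ R) : TauStar τ P R :=
  ReflTransGen.tail h h2

theorem ts_head {P Q R : Proc A} (h : Tr P τ Q) (h2 : TauStar τ Q R) : TauStar τ P R :=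
  ReflTransGen.head h h2

theorem ts_cases_tail {P Q : Proc A} (h : TauStar τ P Q) :
    Q = P ∨ ∃ V, TauStar τ P V ∧ Tr V τ Q :=
  ReflTransGen.cases_tail h

theorem ws_single {a : A} {P Q : Proc A} (h : Tr P a Q) : WeakStep τ a P Q :=
  ⟨P, Q, ts_refl, h, ts_refl⟩

theorem ws_pre {a : A} {P Q R : Proc A} (h : TauStar τ P Q) (h2 : WeakStep τ a Q R) :
    WeakStep τ a P R := by
  obtain ⟨X, Y, t1, tv, t2⟩ := h2
  exact ⟨X, Y, ts_trans h t1, tv, t2⟩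

theorem ws_post {a : A} {P Q R : Proc A} (h : WeakStep τ a P Q) (h2 : TauStar τ Q R) :
    WeakStep τ a P R := by
  obtain ⟨X, Y, t1, tv, t2⟩ := h
  exact ⟨X, Y, t1, tv, ts_trans t2 h2⟩

end Aux
section WFRBLemmas

open Relation

variable {A : Type} {τ : A} {B : Proc A → Proc A → Prop}

theorem fwd_ts (hB : IsWeakFRBisim τ B) {P P' Q : Proc A}
    (h : TauStar τ P P') (hpq : B P Q) : ∃ Q', TauStar τ Q Q' ∧ B P' Q' := by
  induction h with
  | refl => exact ⟨Q, ts_refl, hpq⟩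
  | tail _ step ih =>
    obtain ⟨Q1, hts, hb⟩ := ih
    obtain ⟨Q', hts', hb'⟩ := hB.2.1 _ _ _ hb step
    exact ⟨Q', ts_trans hts hts', hb'⟩

theorem bwd_ts (hB : IsWeakFRBisim τ B) {P0 P : Proc A}
    (h : TauStar τ P0 P) : ∀ {Q : Proc A}, B P Q → ∃ Q0, TauStar τ Q0 Q ∧ B P0 Q0 := by
  induction h with
  | refl => exact fun hq => ⟨_, ts_refl, hq⟩
  | tail _ step ih =>
    intro Q hq
    obtain ⟨Q1, hts, hb⟩ := hB.2.2.2.1 _ _ _ hq step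
    obtain ⟨Q0, hts0, hb0⟩ := ih hb
    exact ⟨Q0, ts_trans hts0 hts, hb0⟩

theorem fwd_ws (hB : IsWeakFRBisim τ B) {a : A} {P P' Q : Proc A}
    (hpq : B P Q) (h : WeakStep τ a P P') (ha : a ≠ τ) :
    ∃ Q', WeakStep τ a Q Q' ∧ B P' Q' := by
  obtain ⟨X, Y, t1, tv, t2⟩ := h
  obtain ⟨Q1, s1, b1⟩ := fwd_ts hB t1 hpq
  obtain ⟨Q2, w2, b2⟩ := hB.2.2.1 _ _ _ _ b1 tv ha
  obtain ⟨Q', s3, b3⟩ := fwd_ts hB t2 b2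
  exact ⟨Q', ws_post (ws_pre s1 w2) s3, b3⟩

theorem bwd_ws (hB : IsWeakFRBisim τ B) {a : A} {P0 P Q : Proc A}
    (hpq : B P Q) (h : WeakStep τ a P0 P) (ha : a ≠ τ) :
    ∃ Q0, WeakStep τ a Q0 Q ∧ B P0 Q0 := by
  obtain ⟨X, Y, t1, tv, t2⟩ := h
  obtain ⟨Qb, s3, b3⟩ := bwd_ts hB t2 hpq
  obtain ⟨Qa, w2, b2⟩ := hB.2.2.2.2 _ _ _ _ b3 tv ha
  obtain ⟨Q0, s1, b1⟩ := bwd_ts hB t1 b2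
  exact ⟨Q0, ws_post (ws_pre s1 w2) s3, b1⟩

theorem wfrb_bisim : IsWeakFRBisim τ (WFRB τ) := by
  refine ⟨?_, ?_, ?_, ?_, ?_⟩
  · rintro P Q ⟨B, hB, h⟩; exact ⟨B, hB, hB.1 _ _ h⟩
  · rintro P Q P' ⟨B, hB, h⟩ step
    obtain ⟨Q', ts, hb⟩ := hB.2.1 _ _ _ h step; exact ⟨Q', ts, B, hB, hb⟩
  · rintro P Q a P' ⟨B, hB, h⟩ step ha
    obtain ⟨Q', ws, hb⟩ := hB.2.2.1 _ _ _ _ h step ha; exact ⟨Q', ws, B, hB, hb⟩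
  · rintro P Q P' ⟨B, hB, h⟩ step
    obtain ⟨Q', ts, hb⟩ := hB.2.2.2.1 _ _ _ h step; exact ⟨Q', ts, B, hB, hb⟩
  · rintro P Q a P' ⟨B, hB, h⟩ step ha
    obtain ⟨Q', ws, hb⟩ := hB.2.2.2.2 _ _ _ _ h step ha; exact ⟨Q', ws, B, hB, hb⟩

theorem wfrb_refl {P : Proc A} : WFRB τ P P := by
  refine ⟨Eq, ⟨?_, ?_, ?_, ?_, ?_⟩, rfl⟩
  · rintro P Q rfl; rfl
  · rintro P Q P' rfl step; exact ⟨P', ts_single step, rfl⟩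
  · rintro P Q a P' rfl step ha; exact ⟨P', ws_single step, rfl⟩
  · rintro P Q P' rfl step; exact ⟨P', ts_single step, rfl⟩
  · rintro P Q a P' rfl step ha; exact ⟨P', ws_single step, rfl⟩

theorem wfrb_symm {P Q : Proc A} (h : WFRB τ P Q) : WFRB τ Q P := wfrb_bisim.1 _ _ h

theorem wfrb_trans {P Q R : Proc A} (h1 : WFRB τ P Q) (h2 : WFRB τ Q R) : WFRB τ P R := by
  refine ⟨fun X Z => ∃ Y, WFRB τ X Y ∧ WFRB τ Y Z, ⟨?_, ?_, ?_, ?_, ?_⟩, ⟨Q, h1, h2⟩⟩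
  · rintro X Z ⟨Y, a, b⟩; exact ⟨Y, wfrb_symm b, wfrb_symm a⟩
  · rintro X Z X' ⟨Y, a, b⟩ step
    obtain ⟨Y', ts, a'⟩ := wfrb_bisim.2.1 _ _ _ a step
    obtain ⟨Z', ts2, b'⟩ := fwd_ts wfrb_bisim ts b
    exact ⟨Z', ts2, Y', a', b'⟩
  · rintro X Z c X' ⟨Y, a, b⟩ step ha
    obtain ⟨Y', ws, a'⟩ := wfrb_bisim.2.2.1 _ _ _ _ a step ha
    obtain ⟨Z', ws2, b'⟩ := fwd_ws wfrb_bisim b ws ha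
    exact ⟨Z', ws2, Y', a', b'⟩
  · rintro X Z X' ⟨Y, a, b⟩ step
    obtain ⟨Y', ts, a'⟩ := wfrb_bisim.2.2.2.1 _ _ _ a step
    obtain ⟨Z', ts2, b'⟩ := bwd_ts wfrb_bisim ts b
    exact ⟨Z', ts2, Y', a', b'⟩
  · rintro X Z c X' ⟨Y, a, b⟩ step ha
    obtain ⟨Y', ws, a'⟩ := wfrb_bisim.2.2.2.2 _ _ _ _ a step ha
    obtain ⟨Z', ws2, b'⟩ := bwd_ws wfrb_bisim b ws ha
    exact ⟨Z', ws2, Y', a', b'⟩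

end WFRBLemmas
section Stuttering

open Relation

variable {A : Type}

/-- X is a τ-intermediate between W and Z where W ≈FRB Z, paired with W or Z. -/
def StutRel (τ : A) (X Y : Proc A) : Prop :=
  ∃ W Z, WFRB τ W Z ∧ TauStar τ W X ∧ TauStar τ X Z ∧ (Y = W ∨ Y = Z)

def StutB (τ : A) (X Y : Proc A) : Prop :=
  WFRB τ X Y ∨ StutRel τ X Y ∨ StutRel τ Y X

variable {τ : A}

theorem stutB_bisim : IsWeakFRBisim τ (StutB τ) := by
  refine ⟨?_, ?_, ?_, ?_, ?_⟩
  · rintro P Q (h | h | h)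
    exacts [Or.inl (wfrb_symm h), Or.inr (Or.inr h), Or.inr (Or.inl h)]
  · -- forward tau
    rintro P Q P' (h | ⟨W, Z, hwz, hWP, hPZ, hy | hy⟩ | ⟨W, Z, hwz, hWQ, hQZ, hy | hy⟩) step
    · obtain ⟨Q', ts, hb⟩ := wfrb_bisim.2.1 _ _ _ h step
      exact ⟨Q', ts, Or.inl hb⟩
    · subst hy; exact ⟨P', ts_tail hWP step, Or.inl wfrb_refl⟩
    · subst hy
      obtain ⟨S, ts, hb⟩ := fwd_ts wfrb_bisim (ts_tail hWP step) hwz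
      exact ⟨S, ts, Or.inl hb⟩
    · subst hy
      obtain ⟨S, ts, hb⟩ := wfrb_bisim.2.1 _ _ _ hwz step
      exact ⟨S, ts_trans hQZ ts, Or.inl hb⟩
    · subst hy; exact ⟨P', ts_tail hQZ step, Or.inl wfrb_refl⟩
  · -- forward visible
    rintro P Q a P' (h | ⟨W, Z, hwz, hWP, hPZ, hy | hy⟩ | ⟨W, Z, hwz, hWQ, hQZ, hy | hy⟩) step ha
    · obtain ⟨Q', ws, hb⟩ := wfrb_bisim.2.2.1 _ _ _ _ h step ha
      exact ⟨Q', ws, Or.inl hb⟩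
    · subst hy; exact ⟨P', ⟨P, P', hWP, step, ts_refl⟩, Or.inl wfrb_refl⟩
    · subst hy
      obtain ⟨S, ws, hb⟩ := fwd_ws wfrb_bisim hwz ⟨P, P', hWP, step, ts_refl⟩ ha
      exact ⟨S, ws, Or.inl hb⟩
    · subst hy
      obtain ⟨S, ws, hb⟩ := wfrb_bisim.2.2.1 _ _ _ _ hwz step ha
      exact ⟨S, ws_pre hQZ ws, Or.inl hb⟩
    · subst hy; exact ⟨P', ⟨P, P', hQZ, step, ts_refl⟩, Or.inl wfrb_refl⟩
  · -- backward tau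
    rintro P Q P' (h | ⟨W, Z, hwz, hWP, hPZ, hy | hy⟩ | ⟨W, Z, hwz, hWQ, hQZ, hy | hy⟩) step
    · obtain ⟨Q', ts, hb⟩ := wfrb_bisim.2.2.2.1 _ _ _ h step
      exact ⟨Q', ts, Or.inl hb⟩
    · subst hy
      rcases ts_cases_tail hWP with heq | ⟨V, hWV, hVP⟩
      · subst heq; exact ⟨P', ts_single step, Or.inl wfrb_refl⟩
      · obtain ⟨hPV, -⟩ := tr_unique step hVP
        subst hPV
        exact ⟨Q, ts_refl, Or.inr (Or.inl ⟨Q, Z, hwz, hWV, ts_head hVP hPZ, Or.inl rfl⟩)⟩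
    · subst hy
      rcases ts_cases_tail hWP with heq | ⟨V, hWV, hVP⟩
      · subst heq
        obtain ⟨Q', ts, hb⟩ := wfrb_bisim.2.2.2.1 _ _ _ hwz step
        exact ⟨Q', ts, Or.inl hb⟩
      · obtain ⟨hPV, -⟩ := tr_unique step hVP
        subst hPV
        exact ⟨Q, ts_refl, Or.inr (Or.inl ⟨W, Q, hwz, hWV, ts_head hVP hPZ, Or.inr rfl⟩)⟩
    · subst hy; exact ⟨P', ts_head step hWQ, Or.inl wfrb_refl⟩
    · subst hy
      rcases ts_cases_tail hQZ with heq | ⟨V, hQV, hVZ⟩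
      · subst heq; exact ⟨P', ts_single step, Or.inl wfrb_refl⟩
      · obtain ⟨hPV, -⟩ := tr_unique step hVZ
        subst hPV
        exact ⟨W, hWQ, Or.inr (Or.inl ⟨W, P, hwz, ts_trans hWQ hQV, ts_single hVZ, Or.inl rfl⟩)⟩
  · -- backward visible
    rintro P Q a P' (h | ⟨W, Z, hwz, hWP, hPZ, hy | hy⟩ | ⟨W, Z, hwz, hWQ, hQZ, hy | hy⟩) step ha
    · obtain ⟨Q', ws, hb⟩ := wfrb_bisim.2.2.2.2 _ _ _ _ h step ha
      exact ⟨Q', ws, Or.inl hb⟩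
    · subst hy
      rcases ts_cases_tail hWP with heq | ⟨V, hWV, hVP⟩
      · subst heq; exact ⟨P', ws_single step, Or.inl wfrb_refl⟩
      · exact absurd (tr_unique step hVP).2 ha
    · subst hy
      rcases ts_cases_tail hWP with heq | ⟨V, hWV, hVP⟩
      · subst heq
        obtain ⟨Q', ws, hb⟩ := wfrb_bisim.2.2.2.2 _ _ _ _ hwz step ha
        exact ⟨Q', ws, Or.inl hb⟩
      · exact absurd (tr_unique step hVP).2 ha
    · subst hy; exact ⟨P', ⟨P', P, ts_refl, step, hWQ⟩, Or.inl wfrb_refl⟩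
    · subst hy
      rcases ts_cases_tail hQZ with heq | ⟨V, hQV, hVZ⟩
      · subst heq; exact ⟨P', ws_single step, Or.inl wfrb_refl⟩
      · exact absurd (tr_unique step hVZ).2 ha
  
theorem wfrb_stut_start {W X Z : Proc A} (hwz : WFRB τ W Z)
    (h1 : TauStar τ W X) (h2 : TauStar τ X Z) : WFRB τ X W :=
  ⟨StutB τ, stutB_bisim, Or.inr (Or.inl ⟨W, Z, hwz, h1, h2, Or.inl rfl⟩)⟩

theorem wfrb_stut_end {W X Z : Proc A} (hwz : WFRB τ W Z)
    (h1 : TauStar τ W X) (h2 : TauStar τ X Z) : WFRB τ X Z :=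
  ⟨StutB τ, stutB_bisim, Or.inr (Or.inl ⟨W, Z, hwz, h1, h2, Or.inr rfl⟩)⟩

end Stuttering
section Branching

open Relation

variable {A : Type} {τ : A}

theorem wfrb_key {Q Q'' : Proc A} (hpath : TauStar τ Q Q'') :
    ∀ {P P' : Proc A}, WFRB τ P Q → Tr P τ P' → WFRB τ P' Q'' →
      WFRB τ P' Q ∨
        ∃ Qk Q2, TauStar τ Q Qk ∧ Tr Qk τ Q2 ∧ WFRB τ P Qk ∧ WFRB τ P' Q2 := by
  induction hpath with
  | refl => exact fun hPQ _ h => Or.inl h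
  | @tail Qk Q'' hQQk step ih =>
    intro P P' hPQ hstep hP'Q''
    obtain ⟨X, hXP', hQkX⟩ := wfrb_bisim.2.2.2.1 _ _ _ (wfrb_symm hP'Q'') step
    rcases ts_cases_tail hXP' with heq | ⟨V, hXV, hVP'⟩
    · subst heq
      rcases ih hPQ hstep (wfrb_symm hQkX) with h | ⟨Qj, Q2, p, t, r1, r2⟩
      · exact Or.inl h
      · exact Or.inr ⟨Qj, Q2, p, t, r1, r2⟩
    · obtain ⟨hVP, -⟩ := tr_unique hVP' hstep
      subst hVP
      obtain ⟨X0, hX0X, hQX0⟩ := bwd_ts wfrb_bisim hQQk hQkX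
      have hX0P : WFRB τ X0 V := wfrb_trans (wfrb_symm hQX0) (wfrb_symm hPQ)
      have hXP : WFRB τ X V := wfrb_stut_end hX0P hX0X hXV
      have hPQk : WFRB τ V Qk := wfrb_trans (wfrb_symm hXP) (wfrb_symm hQkX)
      exact Or.inr ⟨Qk, Q'', hQQk, step, hPQk, hP'Q''⟩

theorem wfrb_branching : IsBranchingBisim τ (WFRB τ) := by
  refine ⟨fun P Q h => wfrb_symm h, ?_⟩
  intro P Q a P' hPQ step
  by_cases ha : a = τ
  · subst ha
    obtain ⟨Q'', ts, h'⟩ := wfrb_bisim.2.1 _ _ _ hPQ step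
    rcases wfrb_key ts hPQ step h' with h | ⟨Qk, Q2, p, t, r1, r2⟩
    · exact Or.inl ⟨rfl, h⟩
    · exact Or.inr ⟨Qk, Q2, p, t, r1, r2⟩
  · obtain ⟨Q', ws, h'⟩ := wfrb_bisim.2.2.1 _ _ _ _ hPQ step ha
    obtain ⟨Q1, Q2, p1, tv, p2⟩ := ws
    -- (i) P' ≈ Q2
    obtain ⟨X, hXP', hQ2X⟩ := bwd_ts wfrb_bisim p2 (wfrb_symm h')
    have hXeq : X = P' := by
      rcases ts_cases_tail hXP' with h | ⟨V, _, hV⟩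
      · exact h.symm
      · exact absurd (tr_unique hV step).2.symm ha
    rw [hXeq] at hQ2X
    -- hQ2X : WFRB τ Q2 P'
    obtain ⟨Y, wsY, hQ1Y⟩ := wfrb_bisim.2.2.2.2 _ _ _ _ hQ2X tv ha
    obtain ⟨Ya, Yb, ty1, tyv, ty2⟩ := wsY
    have hYb : Yb = P' := by
      rcases ts_cases_tail ty2 with h | ⟨V, _, hV⟩
      · exact h.symm
      · exact absurd (tr_unique hV step).2.symm ha
    rw [hYb] at tyv
    obtain ⟨hYaP, -⟩ := tr_unique tyv step
    rw [hYaP] at ty1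
    -- ty1 : TauStar τ Y P
    obtain ⟨X0, hX0Y, hQX0⟩ := bwd_ts wfrb_bisim p1 hQ1Y
    have hX0P : WFRB τ X0 P := wfrb_trans (wfrb_symm hQX0) (wfrb_symm hPQ)
    have hYP : WFRB τ Y P := wfrb_stut_end hX0P hX0Y ty1
    have hPQ1 : WFRB τ P Q1 := wfrb_trans (wfrb_symm hYP) (wfrb_symm hQ1Y)
    exact Or.inr ⟨Q1, Q2, p1, tv, hPQ1, wfrb_symm hQ2X⟩

end Branching
section SemiBranching

open Relation

variable {A : Type}

theorem bb_symm {τ : A} {P Q : Proc A} (h : BB τ P Q) : BB τ Q P := by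
  obtain ⟨B, hB, hpq⟩ := h; exact ⟨B, hB, hB.1 _ _ hpq⟩

theorem bb_step {τ a : A} {P Q P' : Proc A} (h : BB τ P Q) (step : Tr P a P') :
    (a = τ ∧ BB τ P' Q) ∨
      ∃ Q1 Q', TauStar τ Q Q1 ∧ Tr Q1 a Q' ∧ BB τ P Q1 ∧ BB τ P' Q' := by
  obtain ⟨B, hB, hpq⟩ := h
  rcases hB.2 _ _ _ _ hpq step with ⟨ha, hb⟩ | ⟨Q1, Q', ts, tv, b1, b2⟩
  · exact Or.inl ⟨ha, B, hB, hb⟩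
  · exact Or.inr ⟨Q1, Q', ts, tv, ⟨B, hB, b1⟩, ⟨B, hB, b2⟩⟩

def IsSemiBB (τ : A) (B : Proc A → Proc A → Prop) : Prop :=
  (∀ P Q, B P Q → B Q P) ∧
  ∀ P Q a P', B P Q → Tr P a P' →
    (a = τ ∧ ∃ Q1, TauStar τ Q Q1 ∧ B P Q1 ∧ B P' Q1) ∨
    (∃ Q1 Q', TauStar τ Q Q1 ∧ Tr Q1 a Q' ∧ B P Q1 ∧ B P' Q')

def SB (τ : A) (P Q : Proc A) : Prop := ∃ B, IsSemiBB τ B ∧ B P Q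

variable {τ : A}

theorem semibb_of_bb {B : Proc A → Proc A → Prop} (hB : IsBranchingBisim τ B) :
    IsSemiBB τ B := by
  refine ⟨hB.1, ?_⟩
  intro P Q a P' hpq step
  rcases hB.2 _ _ _ _ hpq step with ⟨ha, hb⟩ | ⟨Q1, Q', ts, tv, b1, b2⟩
  · exact Or.inl ⟨ha, Q, ts_refl, hpq, hb⟩
  · exact Or.inr ⟨Q1, Q', ts, tv, b1, b2⟩

theorem sb_semibb : IsSemiBB τ (SB τ) := by
  constructor
  · rintro P Q ⟨B, hB, h⟩; exact ⟨B, hB, hB.1 _ _ h⟩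
  · rintro P Q a P' ⟨B, hB, h⟩ step
    rcases hB.2 _ _ _ _ h step with ⟨ha, Q1, ts, b1, b2⟩ | ⟨Q1, Q', ts, tv, b1, b2⟩
    · exact Or.inl ⟨ha, Q1, ts, ⟨B, hB, b1⟩, ⟨B, hB, b2⟩⟩
    · exact Or.inr ⟨Q1, Q', ts, tv, ⟨B, hB, b1⟩, ⟨B, hB, b2⟩⟩

theorem sb_fwd_ts {B : Proc A → Proc A → Prop} (hB : IsSemiBB τ B) {X R : Proc A}
    (h : TauStar τ X R) : ∀ {Y : Proc A}, B X Y → ∃ S, TauStar τ Y S ∧ B R S := by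
  induction h using Relation.ReflTransGen.head_induction_on with
  | refl => exact fun h => ⟨_, ts_refl, h⟩
  | head step _ ih =>
    intro Y hXY
    rcases hB.2 _ _ _ _ hXY step with ⟨-, Q1, ts, -, hb⟩ | ⟨Q1, Q', ts, tv, -, hb⟩
    · obtain ⟨S, ts2, hb2⟩ := ih hb
      exact ⟨S, ts_trans ts ts2, hb2⟩
    · obtain ⟨S, ts2, hb2⟩ := ih hb
      exact ⟨S, ts_trans (ts_tail ts tv) ts2, hb2⟩

/-- stuttering closure of a semi-branching bisimulation -/
def SClose (τ : A) (B : Proc A → Proc A → Prop) (P R : Proc A) : Prop :=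
  B P R ∨ (∃ Q Z, B P Q ∧ B P Z ∧ TauStar τ Q R ∧ TauStar τ R Z) ∨
    (∃ Q Z, B R Q ∧ B R Z ∧ TauStar τ Q P ∧ TauStar τ P Z)

theorem sclose_semibb {B : Proc A → Proc A → Prop} (hB : IsSemiBB τ B) :
    IsSemiBB τ (SClose τ B) := by
  constructor
  · rintro P Q (h | h | h)
    exacts [Or.inl (hB.1 _ _ h), Or.inr (Or.inr h), Or.inr (Or.inl h)]
  · rintro P R a P' (h | ⟨Q, Z, h1, h2, t1, t2⟩ | ⟨Q, Z, h1, h2, t1, t2⟩) step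
    · rcases hB.2 _ _ _ _ h step with ⟨ha, Q1, ts, b1, b2⟩ | ⟨Q1, Q', ts, tv, b1, b2⟩
      · exact Or.inl ⟨ha, Q1, ts, Or.inl b1, Or.inl b2⟩
      · exact Or.inr ⟨Q1, Q', ts, tv, Or.inl b1, Or.inl b2⟩
    · rcases hB.2 _ _ _ _ h2 step with ⟨ha, Z1, ts, b1, b2⟩ | ⟨Z1, Z', ts, tv, b1, b2⟩
      · exact Or.inl ⟨ha, Z1, ts_trans t2 ts, Or.inl b1, Or.inl b2⟩
      · exact Or.inr ⟨Z1, Z', ts_trans t2 ts, tv, Or.inl b1, Or.inl b2⟩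
    · obtain ⟨S, tsRS, hPS⟩ := sb_fwd_ts hB t1 (hB.1 _ _ h1)
      rcases hB.2 _ _ _ _ hPS step with ⟨ha, S1, ts, b1, b2⟩ | ⟨S1, S', ts, tv, b1, b2⟩
      · exact Or.inl ⟨ha, S1, ts_trans tsRS ts, Or.inl b1, Or.inl b2⟩
      · exact Or.inr ⟨S1, S', ts_trans tsRS ts, tv, Or.inl b1, Or.inl b2⟩

theorem sb_branching : IsBranchingBisim τ (SB τ) := by
  refine ⟨sb_semibb.1, ?_⟩
  intro P Q a P' h step
  rcases sb_semibb.2 _ _ _ _ h step with ⟨ha, Q1, ts, b1, b2⟩ | ⟨Q1, Q', ts, tv, b1, b2⟩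
  · rcases ts_cases_tail ts with heq | ⟨Q2, ts2, tv2⟩
    · exact Or.inl ⟨ha, by rw [← heq]; exact b2⟩
    · have hmid : SB τ P Q2 :=
        ⟨SClose τ (SB τ), sclose_semibb sb_semibb,
          Or.inr (Or.inl ⟨Q, Q1, h, b1, ts2, ts_single tv2⟩)⟩
      exact Or.inr ⟨Q2, Q1, ts2, by rw [ha]; exact tv2, hmid, b2⟩
  · exact Or.inr ⟨Q1, Q', ts, tv, b1, b2⟩

theorem sb_of_bb {P Q : Proc A} (h : BB τ P Q) : SB τ P Q := by
  obtain ⟨B, hB, hpq⟩ := h; exact ⟨B, semibb_of_bb hB, hpq⟩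

theorem bb_of_sb {P Q : Proc A} (h : SB τ P Q) : BB τ P Q := ⟨SB τ, sb_branching, h⟩

theorem bb_stut {P Q R Q1 : Proc A} (h1 : BB τ P Q) (h2 : BB τ P Q1)
    (t1 : TauStar τ Q R) (t2 : TauStar τ R Q1) : BB τ P R :=
  bb_of_sb ⟨SClose τ (SB τ), sclose_semibb sb_semibb,
    Or.inr (Or.inl ⟨Q, Q1, sb_of_bb h1, sb_of_bb h2, t1, t2⟩)⟩

end SemiBranching
section GenSection

open Relation

variable {A : Type}

/-- Relation generated from (P1,P2) by matched moves, witnessing BB ⊆ WFRB on initial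
processes. -/
inductive Gen (τ : A) (P1 P2 : Proc A) : Proc A → Proc A → Prop
  | base : Gen τ P1 P2 P1 P2
  | symm {P Q} : Gen τ P1 P2 Q P → Gen τ P1 P2 P Q
  | tauL {P Q P'} : Gen τ P1 P2 P Q → Tr P τ P' → BB τ P' Q → Gen τ P1 P2 P' Q
  | tauR {P Q Q'} : Gen τ P1 P2 P Q → Tr Q τ Q' → BB τ P Q' → Gen τ P1 P2 P Q'
  | act {P Q a P' Q'} : Gen τ P1 P2 P Q → Tr P a P' → Tr Q a Q' → BB τ P' Q' →
      Gen τ P1 P2 P' Q'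

variable {τ : A} {P1 P2 : Proc A}

theorem gen_bb (hbb : BB τ P1 P2) {P Q : Proc A} (g : Gen τ P1 P2 P Q) : BB τ P Q := by
  induction g with
  | base => exact hbb
  | symm _ ih => exact bb_symm ih
  | tauL _ _ hb => exact hb
  | tauR _ _ hb => exact hb
  | act _ _ _ hb => exact hb

theorem gen_chain {P Q1 : Proc A} (h1 : BB τ P Q1) :
    ∀ {Q : Proc A}, TauStar τ Q Q1 → Gen τ P1 P2 P Q → BB τ P Q → Gen τ P1 P2 P Q1 := by
  intro Q ts
  induction ts using Relation.ReflTransGen.head_induction_on with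
  | refl => exact fun g _ => g
  | @head Q c step rest ih =>
    intro g hq
    have hc : BB τ P c := bb_stut hq h1 (ts_single step) rest
    exact ih (Gen.tauR g step hc) hc

theorem gen_back (hini1 : Initial P1) (hini2 : Initial P2) {P Q : Proc A}
    (g : Gen τ P1 P2 P Q) :
    (∀ a P0, Tr P0 a P →
      (a = τ → ∃ Q0, TauStar τ Q0 Q ∧ Gen τ P1 P2 P0 Q0) ∧
      (a ≠ τ → ∃ Q0, WeakStep τ a Q0 Q ∧ Gen τ P1 P2 P0 Q0)) ∧
    (∀ a Q0, Tr Q0 a Q →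
      (a = τ → ∃ X, TauStar τ X P ∧ Gen τ P1 P2 X Q0) ∧
      (a ≠ τ → ∃ X, WeakStep τ a X P ∧ Gen τ P1 P2 X Q0)) := by
  induction g with
  | base =>
    constructor
    · intro a P0 htr; exact absurd hini1 (tr_not_initial htr)
    · intro a Q0 htr; exact absurd hini2 (tr_not_initial htr)
  | symm _ ih =>
    obtain ⟨L, R⟩ := ih
    constructor
    · intro a P0 htr
      obtain ⟨c1, c2⟩ := R a P0 htr
      constructor
      · intro ha; obtain ⟨X, ts, gx⟩ := c1 ha; exact ⟨X, ts, Gen.symm gx⟩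
      · intro ha; obtain ⟨X, ws, gx⟩ := c2 ha; exact ⟨X, ws, Gen.symm gx⟩
    · intro a Q0 htr
      obtain ⟨c1, c2⟩ := L a Q0 htr
      constructor
      · intro ha; obtain ⟨X, ts, gx⟩ := c1 ha; exact ⟨X, ts, Gen.symm gx⟩
      · intro ha; obtain ⟨X, ws, gx⟩ := c2 ha; exact ⟨X, ws, Gen.symm gx⟩
  | @tauL P Q P' g step hb ih =>
    obtain ⟨L, R⟩ := ih
    constructor
    · intro a P0 htr
      obtain ⟨hP0, ha⟩ := tr_unique htr step
      constructor
      · intro _; exact ⟨Q, ts_refl, by rw [hP0]; exact g⟩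
      · intro hne; exact absurd ha hne
    · intro a Q0 htr
      obtain ⟨c1, c2⟩ := R a Q0 htr
      constructor
      · intro ha; obtain ⟨X, ts, gx⟩ := c1 ha; exact ⟨X, ts_tail ts step, gx⟩
      · intro ha; obtain ⟨X, ws, gx⟩ := c2 ha
        exact ⟨X, ws_post ws (ts_single step), gx⟩
  | @tauR P Q Q' g step hb ih =>
    obtain ⟨L, R⟩ := ih
    constructor
    · intro a P0 htr
      obtain ⟨c1, c2⟩ := L a P0 htr
      constructor
      · intro ha; obtain ⟨X, ts, gx⟩ := c1 ha; exact ⟨X, ts_tail ts step, gx⟩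
      · intro ha; obtain ⟨X, ws, gx⟩ := c2 ha
        exact ⟨X, ws_post ws (ts_single step), gx⟩
    · intro a Q0 htr
      obtain ⟨hQ0, ha⟩ := tr_unique htr step
      constructor
      · intro _; exact ⟨P, ts_refl, Gen.symm (by rw [hQ0]; exact Gen.symm g)⟩
      · intro hne; exact absurd ha hne
  | @act P Q b P' Q' g s1 s2 hb ih =>
    constructor
    · intro a P0 htr
      obtain ⟨hP0, ha⟩ := tr_unique htr s1
      constructor
      · intro hat
        refine ⟨Q, ts_single ?_, by rw [hP0]; exact g⟩
        rw [← ha.symm.trans hat]; exact s2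
      · intro _
        refine ⟨Q, ws_single ?_, by rw [hP0]; exact g⟩
        rw [ha]; exact s2
    · intro a Q0 htr
      obtain ⟨hQ0, ha⟩ := tr_unique htr s2
      constructor
      · intro hat
        refine ⟨P, ts_single ?_, Gen.symm (by rw [hQ0]; exact Gen.symm g)⟩
        rw [← ha.symm.trans hat]; exact s1
      · intro _
        refine ⟨P, ws_single ?_, Gen.symm (by rw [hQ0]; exact Gen.symm g)⟩
        rw [ha]; exact s1

theorem gen_wfr (hini1 : Initial P1) (hini2 : Initial P2) (hbb : BB τ P1 P2) :
    IsWeakFRBisim τ (Gen τ P1 P2) := by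
  refine ⟨?_, ?_, ?_, ?_, ?_⟩
  · intro P Q g; exact Gen.symm g
  · intro P Q P' g step
    rcases bb_step (gen_bb hbb g) step with ⟨-, hb⟩ | ⟨Q1, Q', ts, tv, b1, b2⟩
    · exact ⟨Q, ts_refl, Gen.tauL g step hb⟩
    · have g1 : Gen τ P1 P2 P Q1 := gen_chain b1 ts g (gen_bb hbb g)
      exact ⟨Q', ts_tail ts tv, Gen.act g1 step tv b2⟩
  · intro P Q a P' g step ha
    rcases bb_step (gen_bb hbb g) step with ⟨hat, -⟩ | ⟨Q1, Q', ts, tv, b1, b2⟩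
    · exact absurd hat ha
    · have g1 : Gen τ P1 P2 P Q1 := gen_chain b1 ts g (gen_bb hbb g)
      exact ⟨Q', ⟨Q1, Q', ts, tv, ts_refl⟩, Gen.act g1 step tv b2⟩
  · intro P Q P' g step
    exact ((gen_back hini1 hini2 g).1 τ P' step).1 rfl
  · intro P Q a P' g step ha
    exact ((gen_back hini1 hini2 g).1 a P' step).2 ha

end GenSection
theorem wfrb_eq_bb_on_initial {A : Type} (τ : A) {P1 P2 : Proc A}
    (h1 : Initial P1) (h2 : Initial P2) :
    WFRB τ P1 P2 ↔ BB τ P1 P2 := by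
  constructor
  · intro h
    exact ⟨WFRB τ, wfrb_branching, h⟩
  · intro h
    exact ⟨Gen τ P1 P2, gen_wfr h1 h2 h, Gen.base⟩
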